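/- arXiv:1701.07086 — 4 statements merged into one kernel-verified Lean document; each statement's English description precedes it below -/
import Mathlib

section
/- Let x_1,…,x_n be points in ℝ^p, let h ≤ n, and let H_1 ⊆ {1,…,n} with |H_1| = h. Let m_1 = (1/h)∑_{i∈H_1} x_i and S_1 = (1/h)∑_{i∈H_1}(x_i − m_1)(x_i − m_1)', and assume S_1 is positive definite. Define d_1(i) = (x_i − m_1)' S_1^{-1} (x_i − m_1). If H_2 ⊆ {1,…,n} with |H_2| = h satisfies ∑_{i∈H_2} d_1(i) ≤ ∑_{i∈H_1} d_1(i), and m_2, S_2 are the mean and sample covariance of the points indexed by H_2, then det(S_2) ≤ det(S_1), with equality if and only if m_2 = m_1 and S_2 = S_1. -/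
/-!
Expanding the scatter of `H₂` about `m₁` (parallel axis theorem) gives
`∑_{H₂} d₁ = h (tr (S₁⁻¹ S₂) + (m₂ - m₁)' S₁⁻¹ (m₂ - m₁))`, while `∑_{H₁} d₁ = h p`; so the
hypothesis forces `tr (S₁⁻¹ S₂) ≤ p`. Writing `S₁ = B'B`, the matrix `C = B'⁻¹ S₂ B⁻¹` is positive
semidefinite with `tr C ≤ p` and `det C = det S₂ / det S₁`, and `x ≤ exp (x - 1)` applied to the
eigenvalues of `C` gives `det C ≤ 1`, with equality only for `C = 1`, i.e. `S₂ = S₁`. Then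
`tr (S₁⁻¹ S₂) = p`, so the mean term vanishes and `m₂ = m₁`.
-/

open Matrix Finset

section

variable {ι : Type*} [Fintype ι] {f : ι → ℝ}

lemma prod_le_exp_sum_sub_card (hf : ∀ i, 0 ≤ f i) :
    ∏ i, f i ≤ Real.exp (∑ i, f i - Fintype.card ι) := by
  calc ∏ i, f i ≤ ∏ i, Real.exp (f i - 1) := prod_le_prod (fun i _ ↦ hf i) fun i _ ↦ ?_
    _ = Real.exp (∑ i, f i - Fintype.card ι) := by simp [← Real.exp_sum]
  linarith [Real.add_one_le_exp (f i - 1)]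

lemma prod_lt_exp_sum_sub_card (hf : ∀ i, 0 < f i) (hne : ∃ i, f i ≠ 1) :
    ∏ i, f i < Real.exp (∑ i, f i - Fintype.card ι) := by
  obtain ⟨j, hj⟩ := hne
  calc ∏ i, f i < ∏ i, Real.exp (f i - 1) :=
        prod_lt_prod (fun i _ ↦ hf i) (fun i _ ↦ ?_) ⟨j, mem_univ j, ?_⟩
    _ = Real.exp (∑ i, f i - Fintype.card ι) := by simp [← Real.exp_sum]
  · linarith [Real.add_one_le_exp (f i - 1)]
  · linarith [Real.add_one_lt_exp (sub_ne_zero.2 hj)]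

lemma prod_le_one_of_sum_le_card (hf : ∀ i, 0 ≤ f i) (hsum : ∑ i, f i ≤ Fintype.card ι) :
    ∏ i, f i ≤ 1 :=
  (prod_le_exp_sum_sub_card hf).trans (Real.exp_le_one_iff.2 (by linarith))

lemma eq_one_of_prod_eq_one_of_sum_le_card (hf : ∀ i, 0 ≤ f i)
    (hsum : ∑ i, f i ≤ Fintype.card ι) (hprod : ∏ i, f i = 1) (i : ι) : f i = 1 := by
  by_contra hi
  have hpos : ∀ j, 0 < f j := fun j ↦ (hf j).lt_of_ne fun h0 ↦
    one_ne_zero (hprod ▸ prod_eq_zero (mem_univ j) h0.symm)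
  have := prod_lt_exp_sum_sub_card hpos ⟨i, hi⟩
  linarith [Real.exp_le_one_iff.2 (sub_nonpos.2 hsum)]

end

namespace Matrix

variable {ι n R : Type*}

lemma sum_vecMulVec_left [NonUnitalNonAssocSemiring R] (s : Finset ι) (u : ι → n → R)
    (v : n → R) : ∑ i ∈ s, vecMulVec (u i) v = vecMulVec (∑ i ∈ s, u i) v := by
  ext a b
  simp [vecMulVec_apply, sum_apply, sum_mul]

lemma sum_vecMulVec_right [NonUnitalNonAssocSemiring R] (s : Finset ι) (u : n → R)
    (v : ι → n → R) : ∑ i ∈ s, vecMulVec u (v i) = vecMulVec u (∑ i ∈ s, v i) := by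
  ext a b
  simp [vecMulVec_apply, sum_apply, mul_sum]

lemma sum_vecMulVec_sub_sub [CommRing R] {x : ι → n → R} {H : Finset ι} {m : n → R}
    (hm : ∑ i ∈ H, x i = (#H : R) • m) (c : n → R) :
    ∑ i ∈ H, vecMulVec (x i - c) (x i - c) =
      ∑ i ∈ H, vecMulVec (x i - m) (x i - m) + (#H : R) • vecMulVec (m - c) (m - c) := by
  have hdev : ∑ i ∈ H, (x i - m) = 0 := by
    rw [sum_sub_distrib, hm, sum_const, Nat.cast_smul_eq_nsmul, sub_self]
  have hsplit : ∀ i, x i - c = (x i - m) + (m - c) := fun i ↦ by abel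
  simp only [hsplit, add_vecMulVec, vecMulVec_add, sum_add_distrib, sum_vecMulVec_left,
    sum_vecMulVec_right, hdev, zero_vecMulVec, vecMulVec_zero, sum_const, Nat.cast_smul_eq_nsmul]
  abel

variable [Fintype n] [CommRing R]

lemma dotProduct_mulVec_eq_trace_mul_vecMulVec (A : Matrix n n R) (u : n → R) :
    u ⬝ᵥ (A *ᵥ u) = (A * vecMulVec u u).trace := by
  rw [mul_vecMulVec, trace_vecMulVec, dotProduct_comm]

lemma sum_dotProduct_mulVec_sub_sub (A : Matrix n n R) {x : ι → n → R} {H : Finset ι}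
    {m : n → R} (hm : ∑ i ∈ H, x i = (#H : R) • m) (c : n → R) :
    ∑ i ∈ H, (x i - c) ⬝ᵥ (A *ᵥ (x i - c)) =
      (A * ∑ i ∈ H, vecMulVec (x i - m) (x i - m)).trace + #H * ((m - c) ⬝ᵥ (A *ᵥ (m - c))) := by
  simp only [dotProduct_mulVec_eq_trace_mul_vecMulVec, ← trace_sum, ← mul_sum,
    sum_vecMulVec_sub_sub hm c, mul_add, trace_add, Matrix.mul_smul, trace_smul, smul_eq_mul]

end Matrix

namespace Matrix

variable {n : Type*} [Fintype n] [DecidableEq n]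

lemma IsHermitian.eq_one_of_eigenvalues_eq_one {A : Matrix n n ℝ} (hA : A.IsHermitian)
    (h1 : ∀ i, hA.eigenvalues i = 1) : A = 1 := by
  have hdiag : (RCLike.ofReal ∘ hA.eigenvalues : n → ℝ) = fun _ ↦ 1 := by ext i; simp [h1 i]
  rw [hA.spectral_theorem, hdiag, diagonal_one, map_one]

lemma PosSemidef.det_le_one_of_trace_le_card {C : Matrix n n ℝ} (hC : C.PosSemidef)
    (htr : C.trace ≤ Fintype.card n) : C.det ≤ 1 ∧ (C.det = 1 → C = 1) := by
  have hsum : ∑ i, hC.1.eigenvalues i ≤ Fintype.card n := by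
    simpa [hC.1.trace_eq_sum_eigenvalues] using htr
  have hdet : C.det = ∏ i, hC.1.eigenvalues i := by simp [hC.1.det_eq_prod_eigenvalues]
  rw [hdet]
  exact ⟨prod_le_one_of_sum_le_card hC.eigenvalues_nonneg hsum, fun h ↦
    hC.1.eq_one_of_eigenvalues_eq_one
      (eq_one_of_prod_eq_one_of_sum_le_card hC.eigenvalues_nonneg hsum h)⟩

open scoped MatrixOrder in
lemma PosDef.det_le_of_trace_inv_mul_le {S T : Matrix n n ℝ} (hS : S.PosDef) (hT : T.PosSemidef)
    (htr : (S⁻¹ * T).trace ≤ Fintype.card n) : T.det ≤ S.det ∧ (T.det = S.det → T = S) := by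
  have hSdet := hS.det_pos
  obtain ⟨B, rfl⟩ := CStarAlgebra.nonneg_iff_eq_star_mul_self.mp hS.posSemidef.nonneg
  rw [star_eq_conjTranspose] at *
  have hB : IsUnit B.det := isUnit_iff_ne_zero.2 fun h0 ↦ by simp [det_mul, h0] at hSdet
  set C := (B⁻¹)ᴴ * T * B⁻¹
  have hCtr : C.trace = ((Bᴴ * B)⁻¹ * T).trace := by
    rw [trace_mul_cycle, mul_inv_rev, conjTranspose_nonsing_inv]
  have hTC : T = Bᴴ * C * B := by
    simp only [C, Matrix.mul_assoc, nonsing_inv_mul _ hB, Matrix.mul_one]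
    rw [← Matrix.mul_assoc, ← conjTranspose_mul, nonsing_inv_mul _ hB, conjTranspose_one,
      Matrix.one_mul]
  have hdetT : T.det = (Bᴴ * B).det * C.det := by
    conv_lhs => rw [hTC]
    simp only [det_mul]; ring
  have hC : C.PosSemidef := hT.conjTranspose_mul_mul_same B⁻¹
  obtain ⟨hle, heq⟩ := hC.det_le_one_of_trace_le_card (hCtr ▸ htr)
  refine ⟨by nlinarith, fun h ↦ ?_⟩
  rw [hTC, heq (mul_left_cancel₀ hSdet.ne' (by rw [← hdetT, h, mul_one])), Matrix.mul_one]

end Matrix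

theorem mcd_C_step_general {n p : ℕ} (x : Fin n → (Fin p → ℝ)) (h : ℕ)
    (hh : 0 < h)
    (H₁ H₂ : Finset (Fin n)) (hH₁ : H₁.card = h) (hH₂ : H₂.card = h)
    (m₁ m₂ : Fin p → ℝ) (S₁ S₂ : Matrix (Fin p) (Fin p) ℝ)
    (hm₁ : m₁ = (h : ℝ)⁻¹ • ∑ i ∈ H₁, x i)
    (hS₁ : S₁ = (h : ℝ)⁻¹ • ∑ i ∈ H₁, vecMulVec (x i - m₁) (x i - m₁))
    (hS₁pd : S₁.PosDef)
    (d₁ : Fin n → ℝ)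
    (hd₁ : ∀ i, d₁ i = (x i - m₁) ⬝ᵥ (S₁⁻¹ *ᵥ (x i - m₁)))
    (hconc : ∑ i ∈ H₂, d₁ i ≤ ∑ i ∈ H₁, d₁ i)
    (hm₂ : m₂ = (h : ℝ)⁻¹ • ∑ i ∈ H₂, x i)
    (hS₂ : S₂ = (h : ℝ)⁻¹ • ∑ i ∈ H₂, vecMulVec (x i - m₂) (x i - m₂)) :
    S₂.det ≤ S₁.det ∧ (S₂.det = S₁.det ↔ (m₂ = m₁ ∧ S₂ = S₁)) := by
  have hh₀ : (h : ℝ) ≠ 0 := Nat.cast_ne_zero.2 hh.ne'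
  have hsum₁ : ∑ i ∈ H₁, x i = (#H₁ : ℝ) • m₁ := by rw [hH₁, (eq_inv_smul_iff₀ hh₀).1 hm₁]
  have hsum₂ : ∑ i ∈ H₂, x i = (#H₂ : ℝ) • m₂ := by rw [hH₂, (eq_inv_smul_iff₀ hh₀).1 hm₂]
  have hS₁inv : S₁⁻¹ * S₁ = 1 := nonsing_inv_mul _ hS₁pd.det_pos.ne'.isUnit
  set q := (m₂ - m₁) ⬝ᵥ (S₁⁻¹ *ᵥ (m₂ - m₁))
  have hd₁H₁ : ∑ i ∈ H₁, d₁ i = h * p := by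
    rw [sum_congr rfl fun i _ ↦ hd₁ i, sum_dotProduct_mulVec_sub_sub _ hsum₁,
      ← (eq_inv_smul_iff₀ hh₀).1 hS₁, Matrix.mul_smul, hS₁inv]
    simp
  have hd₁H₂ : ∑ i ∈ H₂, d₁ i = h * ((S₁⁻¹ * S₂).trace + q) := by
    rw [sum_congr rfl fun i _ ↦ hd₁ i, sum_dotProduct_mulVec_sub_sub _ hsum₂,
      ← (eq_inv_smul_iff₀ hh₀).1 hS₂, Matrix.mul_smul, trace_smul, hH₂, smul_eq_mul, mul_add]
  have htr : (S₁⁻¹ * S₂).trace + q ≤ p :=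
    le_of_mul_le_mul_left (hd₁H₂ ▸ hd₁H₁ ▸ hconc) (Nat.cast_pos.2 hh)
  have hq : 0 ≤ q := by
    simpa only [star_trivial] using hS₁pd.inv.posSemidef.dotProduct_mulVec_nonneg (m₂ - m₁)
  have hS₂psd : S₂.PosSemidef := hS₂ ▸ (posSemidef_sum H₂ fun i _ ↦ by
    simpa using posSemidef_vecMulVec_self_star (x i - m₂)).smul (by positivity)
  obtain ⟨hdet, hdet_eq⟩ := hS₁pd.det_le_of_trace_inv_mul_le hS₂psd (by simp; linarith)
  refine ⟨hdet, fun h_eq ↦ ?_, fun ⟨_, hS⟩ ↦ hS ▸ rfl⟩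
  obtain rfl := hdet_eq h_eq
  have hq₀ : q = 0 := by
    rw [hS₁inv, trace_one, Fintype.card_fin] at htr
    linarith
  refine ⟨by_contra fun hne ↦ ?_, rfl⟩
  exact (hS₁pd.inv.dotProduct_mulVec_pos (sub_ne_zero.2 hne)).ne' hq₀

/-- C-step theorem for the MCD (the case ρ = 0 of the generalized C-step
theorem, with the weaker concentration hypothesis): if the sum of Mahalanobis
distances over `H₂` is at most that over `H₁`, then the covariance determinant
does not increase, with equality iff the mean and covariance are unchanged. -/
theorem mcd_C_step {n p : ℕ} (x : Fin n → (Fin p → ℝ)) (h : ℕ)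
    (hh : 0 < h) (hhn : h ≤ n)
    (H₁ H₂ : Finset (Fin n)) (hH₁ : H₁.card = h) (hH₂ : H₂.card = h)
    (m₁ m₂ : Fin p → ℝ) (S₁ S₂ : Matrix (Fin p) (Fin p) ℝ)
    (hm₁ : m₁ = (h : ℝ)⁻¹ • ∑ i ∈ H₁, x i)
    (hS₁ : S₁ = (h : ℝ)⁻¹ • ∑ i ∈ H₁, vecMulVec (x i - m₁) (x i - m₁))
    (hS₁pd : S₁.PosDef)
    (d₁ : Fin n → ℝ)
    (hd₁ : ∀ i, d₁ i = (x i - m₁) ⬝ᵥ (S₁⁻¹ *ᵥ (x i - m₁)))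
    (hconc : ∑ i ∈ H₂, d₁ i ≤ ∑ i ∈ H₁, d₁ i)
    (hm₂ : m₂ = (h : ℝ)⁻¹ • ∑ i ∈ H₂, x i)
    (hS₂ : S₂ = (h : ℝ)⁻¹ • ∑ i ∈ H₂, vecMulVec (x i - m₂) (x i - m₂)) :
    S₂.det ≤ S₁.det ∧ (S₂.det = S₁.det ↔ (m₂ = m₁ ∧ S₂ = S₁)) :=
  mcd_C_step_general x h hh H₁ H₂ hH₁ hH₂ m₁ m₂ S₁ S₂ hm₁ hS₁ hS₁pd d₁ hd₁ hconc hm₂ hS₂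
end

section
/- Let x_1,…,x_n be points in ℝ^p, let h ≤ n, and let H_1 ⊆ {1,…,n} with |H_1| = h. Let m_1, S_1 be the mean and sample covariance of the points indexed by H_1, let T be a symmetric positive definite p×p matrix, let ρ ∈ (0,1], and set K_1 = ρT + (1−ρ)S_1. Define d_1(i) = (x_i − m_1)' K_1^{-1} (x_i − m_1). If H_2 is a set of indices of h smallest values among d_1(1),…,d_1(n), and m_2, S_2, K_2 = ρT + (1−ρ)S_2 are computed from H_2, then det(K_2) ≤ det(K_1). -/
/-!
Put `A = K₁⁻¹` and `q(v) = v ⬝ᵥ A v`. Since `tr (A * vecMulVec v v) = q(v)`, the trace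
`tr (A K)` of a regularized covariance `K = ρT + (1-ρ)S` is `ρ tr (A T)` plus `(1-ρ)/h` times the
sum of `q(xᵢ - m)` over its subset. For `H₂` this sum only decreases when `m₂` is replaced by
`m₁` (the mean minimizes it) and then when `H₂` is replaced by `H₁` (`H₂` collects the smallest
`d₁ i = q(xᵢ - m₁)`); hence `tr (K₁⁻¹ K₂) ≤ tr (K₁⁻¹ K₁) = p`. By AM-GM on the eigenvalues of
`K₁^{-1/2} K₂ K₁^{-1/2}`, whose trace is at most `p`, its determinant `det K₂ / det K₁` is at most 1.
-/

open Matrix BigOperators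

theorem Finset.sum_le_sum_of_card_eq_of_forall_le {ι M : Type*} [DecidableEq ι] [AddCommMonoid M]
    [LinearOrder M] [IsOrderedAddMonoid M] {f : ι → M} {s t : Finset ι} (hcard : s.card = t.card)
    (hs : ∀ i ∈ s, ∀ j ∉ s, f i ≤ f j) : ∑ i ∈ s, f i ≤ ∑ i ∈ t, f i := by
  rw [← Finset.sum_inter_add_sum_sdiff s t, ← Finset.sum_inter_add_sum_sdiff t s,
    Finset.inter_comm t s]
  gcongr (∑ i ∈ s ∩ t, f i) + ?_
  have hcard' : (s \ t).card = (t \ s).card := by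
    have hs' := Finset.card_inter_add_card_sdiff s t
    have ht' := Finset.card_inter_add_card_sdiff t s
    rw [Finset.inter_comm] at ht'
    omega
  rcases (t \ s).eq_empty_or_nonempty with hts | hts
  · rw [hts, Finset.card_empty, Finset.card_eq_zero] at hcard'
    simp [hts, hcard']
  obtain ⟨j, hj, hjmin⟩ := (t \ s).exists_min_image f hts
  calc ∑ i ∈ s \ t, f i ≤ (s \ t).card • f j :=
        Finset.sum_le_card_nsmul _ _ _ fun i hi =>
          hs i (Finset.mem_sdiff.1 hi).1 j (Finset.mem_sdiff.1 hj).2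
    _ = (t \ s).card • f j := by rw [hcard']
    _ ≤ ∑ i ∈ t \ s, f i := Finset.card_nsmul_le_sum _ _ _ hjmin

theorem Finset.sum_sub_centroid_eq_zero {ι V : Type*} [AddCommGroup V] [Module ℝ V] (s : Finset ι)
    (x : ι → V) : ∑ i ∈ s, (x i - (s.card : ℝ)⁻¹ • ∑ j ∈ s, x j) = 0 := by
  rcases s.eq_empty_or_nonempty with rfl | hs
  · simp
  rw [Finset.sum_sub_distrib, Finset.sum_const, ← Nat.cast_smul_eq_nsmul ℝ, smul_smul,
    mul_inv_cancel₀ (Nat.cast_ne_zero.2 hs.card_pos.ne'), one_smul, sub_self]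

namespace Matrix

variable {n ι : Type*}

theorem PosDef.smul_add_one_sub_smul {T S : Matrix n n ℝ} (hT : T.PosDef) (hS : S.PosSemidef)
    {ρ : ℝ} (hρ : ρ ∈ Set.Ioc 0 1) : (ρ • T + (1 - ρ) • S).PosDef :=
  (hT.smul hρ.1).add_posSemidef (hS.smul (sub_nonneg.2 hρ.2))

variable [Fintype n]

theorem sum_dotProduct_mulVec_sub_centroid_le {A : Matrix n n ℝ} (hA : A.PosSemidef)
    (s : Finset ι) (x : ι → n → ℝ) (m : n → ℝ) :
    ∑ i ∈ s, (x i - (s.card : ℝ)⁻¹ • ∑ j ∈ s, x j) ⬝ᵥ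
        (A *ᵥ (x i - (s.card : ℝ)⁻¹ • ∑ j ∈ s, x j)) ≤
      ∑ i ∈ s, (x i - m) ⬝ᵥ (A *ᵥ (x i - m)) := by
  set c := (s.card : ℝ)⁻¹ • ∑ j ∈ s, x j
  set v := fun i => x i - c
  have hv : ∑ i ∈ s, v i = 0 := Finset.sum_sub_centroid_eq_zero s x
  have hexpand : ∀ i, (x i - m) ⬝ᵥ (A *ᵥ (x i - m)) =
      v i ⬝ᵥ (A *ᵥ v i) + v i ⬝ᵥ (A *ᵥ (c - m)) + (c - m) ⬝ᵥ (A *ᵥ v i) +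
        (c - m) ⬝ᵥ (A *ᵥ (c - m)) := by
    intro i
    rw [show x i - m = v i + (c - m) by simp [v]]
    simp only [mulVec_add, dotProduct_add, add_dotProduct]
    ring
  simp only [hexpand, Finset.sum_add_distrib, ← sum_dotProduct, ← dotProduct_sum, ← mulVec_sum,
    hv, zero_dotProduct, mulVec_zero, dotProduct_zero, add_zero, Finset.sum_const]
  have hcm := hA.dotProduct_mulVec_nonneg (c - m)
  rw [star_trivial] at hcm
  exact le_add_of_nonneg_right (by rw [smul_dotProduct]; exact nsmul_nonneg hcm _)

theorem trace_mul_smul_sum_vecMulVec (A : Matrix n n ℝ) (c : ℝ) (s : Finset ι) (v : ι → n → ℝ) :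
    (A * (c • ∑ i ∈ s, vecMulVec (v i) (v i))).trace = c * ∑ i ∈ s, v i ⬝ᵥ (A *ᵥ v i) := by
  simp [Matrix.mul_sum, trace_sum, mul_vecMulVec, trace_vecMulVec, dotProduct_comm]

theorem posSemidef_smul_sum_vecMulVec {c : ℝ} (hc : 0 ≤ c) (s : Finset ι) (v : ι → n → ℝ) :
    (c • ∑ i ∈ s, vecMulVec (v i) (v i)).PosSemidef :=
  (posSemidef_sum s fun i _ => by simpa using posSemidef_vecMulVec_self_star (v i)).smul hc

variable [DecidableEq n]

theorem PosSemidef.det_le_trace_div_card_pow {N : Matrix n n ℝ} (hN : N.PosSemidef) :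
    N.det ≤ (N.trace / Fintype.card n) ^ Fintype.card n := by
  rcases isEmpty_or_nonempty n with hn | hn
  · simp
  have hcard : (0 : ℝ) < Fintype.card n := by exact_mod_cast Fintype.card_pos
  have hev : ∀ i ∈ Finset.univ, 0 ≤ hN.1.eigenvalues i := fun i _ => hN.eigenvalues_nonneg i
  have amgm := Real.geom_mean_le_arith_mean Finset.univ 1 hN.1.eigenvalues
    (fun _ _ => zero_le_one) (by simpa using hcard) hev
  simp only [Pi.one_apply, Real.rpow_one, one_mul, Finset.sum_const, Finset.card_univ,
    nsmul_eq_mul, mul_one] at amgm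
  rw [Real.rpow_inv_le_iff_of_pos (Finset.prod_nonneg hev)
    (div_nonneg (Finset.sum_nonneg hev) hcard.le) hcard,
    Real.rpow_natCast] at amgm
  simpa [hN.1.det_eq_prod_eigenvalues, hN.1.trace_eq_sum_eigenvalues] using amgm

theorem PosSemidef.det_le_one_of_trace_le_card_s3 {N : Matrix n n ℝ} (hN : N.PosSemidef)
    (htr : N.trace ≤ Fintype.card n) : N.det ≤ 1 := by
  refine hN.det_le_trace_div_card_pow.trans (pow_le_one₀ (div_nonneg hN.trace_nonneg ?_) ?_)
  · positivity
  · exact div_le_one_of_le₀ htr (by positivity)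

open scoped MatrixOrder in
theorem det_le_det_of_trace_inv_mul_le_card {A B : Matrix n n ℝ} (hA : A.PosDef)
    (hB : B.PosSemidef) (htr : (A⁻¹ * B).trace ≤ Fintype.card n) : B.det ≤ A.det := by
  set R := CFC.sqrt A
  have hRR : R * R = A := CFC.sqrt_mul_sqrt_self A hA.posSemidef.nonneg
  have hRinv : R⁻¹.IsHermitian := (CFC.sqrt_nonneg A).posSemidef.1.inv
  have hdet : (R⁻¹ * B * R⁻¹).det = B.det / A.det := by
    rw [det_mul, det_mul, det_nonsing_inv, Ring.inverse_eq_inv', ← hRR, det_mul]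
    ring
  have hN : (R⁻¹ * B * R⁻¹).PosSemidef := by
    have := hB.mul_mul_conjTranspose_same R⁻¹
    rwa [hRinv.eq] at this
  have hNtr : (R⁻¹ * B * R⁻¹).trace = (A⁻¹ * B).trace := by
    rw [trace_mul_cycle, ← mul_inv_rev, hRR]
  have := hN.det_le_one_of_trace_le_card_s3 (hNtr ▸ htr)
  rwa [hdet, div_le_one hA.det_pos] at this

end Matrix

theorem mrcd_algorithm_C_step_general {n p : ℕ} (x : Fin n → (Fin p → ℝ)) (h : ℕ)
    (T : Matrix (Fin p) (Fin p) ℝ) (hT : T.PosDef)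
    (ρ : ℝ) (hρ : ρ ∈ Set.Ioc (0 : ℝ) 1)
    (H₁ H₂ : Finset (Fin n)) (hH₁ : H₁.card = h) (hH₂ : H₂.card = h)
    (m₁ m₂ : Fin p → ℝ) (S₁ S₂ K₁ K₂ : Matrix (Fin p) (Fin p) ℝ)
    (hS₁ : S₁ = (h : ℝ)⁻¹ • ∑ i ∈ H₁, vecMulVec (x i - m₁) (x i - m₁))
    (hK₁ : K₁ = ρ • T + (1 - ρ) • S₁)
    (d₁ : Fin n → ℝ)
    (hd₁ : ∀ i, d₁ i = (x i - m₁) ⬝ᵥ (K₁⁻¹ *ᵥ (x i - m₁)))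
    (hsmall : ∀ i ∈ H₂, ∀ j ∉ H₂, d₁ i ≤ d₁ j)
    (hm₂ : m₂ = (h : ℝ)⁻¹ • ∑ i ∈ H₂, x i)
    (hS₂ : S₂ = (h : ℝ)⁻¹ • ∑ i ∈ H₂, vecMulVec (x i - m₂) (x i - m₂))
    (hK₂ : K₂ = ρ • T + (1 - ρ) • S₂) :
    K₂.det ≤ K₁.det := by
  have hK₁pd : K₁.PosDef := by
    rw [hK₁, hS₁]
    exact hT.smul_add_one_sub_smul (posSemidef_smul_sum_vecMulVec (by positivity) _ _) hρ
  have hK₂pd : K₂.PosDef := by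
    rw [hK₂, hS₂]
    exact hT.smul_add_one_sub_smul (posSemidef_smul_sum_vecMulVec (by positivity) _ _) hρ
  have hscatter : ∑ i ∈ H₂, (x i - m₂) ⬝ᵥ (K₁⁻¹ *ᵥ (x i - m₂)) ≤ ∑ i ∈ H₁, d₁ i := by
    rw [← hH₂] at hm₂
    calc ∑ i ∈ H₂, (x i - m₂) ⬝ᵥ (K₁⁻¹ *ᵥ (x i - m₂))
        ≤ ∑ i ∈ H₂, d₁ i := by
          simpa only [hm₂, hd₁] using
            sum_dotProduct_mulVec_sub_centroid_le hK₁pd.inv.posSemidef H₂ x m₁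
      _ ≤ ∑ i ∈ H₁, d₁ i := Finset.sum_le_sum_of_card_eq_of_forall_le (hH₂.trans hH₁.symm) hsmall
  have htrS : (K₁⁻¹ * S₂).trace ≤ (K₁⁻¹ * S₁).trace := by
    rw [hS₂, hS₁, trace_mul_smul_sum_vecMulVec, trace_mul_smul_sum_vecMulVec]
    simp only [← hd₁]
    gcongr
  have htr : (K₁⁻¹ * K₂).trace ≤ Fintype.card (Fin p) := by
    have hK₂_eq : K₂ = K₁ + (1 - ρ) • (S₂ - S₁) := by rw [hK₂, hK₁]; module
    rw [hK₂_eq, Matrix.mul_add, trace_add, nonsing_inv_mul _ hK₁pd.det_pos.ne'.isUnit, trace_one,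
      Matrix.mul_smul, trace_smul, Matrix.mul_sub, trace_sub, smul_eq_mul]
    have := mul_nonpos_of_nonneg_of_nonpos (sub_nonneg.2 hρ.2) (sub_nonpos.2 htrS)
    simpa using this
  exact det_le_det_of_trace_inv_mul_le_card hK₁pd hK₂pd.posSemidef htr

/-- The C-step actually used in the MRCD algorithm: taking the `h` observations
with smallest regularized Mahalanobis distances does not increase the
determinant of the regularized covariance matrix. -/
theorem mrcd_algorithm_C_step {n p : ℕ} (x : Fin n → (Fin p → ℝ)) (h : ℕ)
    (hh : 0 < h) (hhn : h ≤ n)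
    (T : Matrix (Fin p) (Fin p) ℝ) (hT : T.PosDef)
    (ρ : ℝ) (hρ : ρ ∈ Set.Ioc (0 : ℝ) 1)
    (H₁ H₂ : Finset (Fin n)) (hH₁ : H₁.card = h) (hH₂ : H₂.card = h)
    (m₁ m₂ : Fin p → ℝ) (S₁ S₂ K₁ K₂ : Matrix (Fin p) (Fin p) ℝ)
    (hm₁ : m₁ = (h : ℝ)⁻¹ • ∑ i ∈ H₁, x i)
    (hS₁ : S₁ = (h : ℝ)⁻¹ • ∑ i ∈ H₁, vecMulVec (x i - m₁) (x i - m₁))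
    (hK₁ : K₁ = ρ • T + (1 - ρ) • S₁)
    (d₁ : Fin n → ℝ)
    (hd₁ : ∀ i, d₁ i = (x i - m₁) ⬝ᵥ (K₁⁻¹ *ᵥ (x i - m₁)))
    (hsmall : ∀ i ∈ H₂, ∀ j ∉ H₂, d₁ i ≤ d₁ j)
    (hm₂ : m₂ = (h : ℝ)⁻¹ • ∑ i ∈ H₂, x i)
    (hS₂ : S₂ = (h : ℝ)⁻¹ • ∑ i ∈ H₂, vecMulVec (x i - m₂) (x i - m₂))
    (hK₂ : K₂ = ρ • T + (1 - ρ) • S₂) :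
    K₂.det ≤ K₁.det :=
  mrcd_algorithm_C_step_general x h T hT ρ hρ H₁ H₂ hH₁ hH₂ m₁ m₂ S₁ S₂ K₁ K₂ hS₁ hK₁ d₁ hd₁ hsmall
    hm₂ hS₂ hK₂
end

section
/- Let x_1,…,x_h be points in ℝ^p with mean m = (1/h)∑_{i=1}^h x_i and sample covariance S = (1/h)∑_{i=1}^h (x_i − m)(x_i − m)', and let y_1,…,y_{p+1} be points in ℝ^p with (1/(p+1))∑_j y_j = 0 and (1/(p+1))∑_j y_j y_j' = T. Let ρ ∈ [0,1], set k = h + p + 1, and define the augmented dataset consisting of the k points √(k(1−ρ)/h)·(x_i − m) for i = 1,…,h together with √(kρ/(p+1))·y_j for j = 1,…,p+1. Then the augmented dataset has mean zero, and its second-moment matrix (1/k)∑ (point)(point)' equals K = ρT + (1−ρ)S. -/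
open Matrix

lemma sum_sub_inv_card_smul_sum {ι K E : Type*} [Fintype ι] [Nonempty ι] [DivisionRing K]
    [CharZero K] [AddCommGroup E] [Module K E] (x : ι → E) :
    ∑ i, (x i - (Fintype.card ι : K)⁻¹ • ∑ j, x j) = 0 := by
  rw [Finset.sum_sub_distrib, Finset.sum_const, Finset.card_univ, ← Nat.cast_smul_eq_nsmul K,
    smul_inv_smul₀ (Nat.cast_ne_zero.mpr Fintype.card_ne_zero), sub_self]

section Augmentation

variable {ι κ n R : Type*} [Fintype ι] [Fintype κ] [CommSemiring R] (a b : R)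
  (u : ι → n → R) (w : κ → n → R)

lemma sum_elim_smul :
    ∑ z, Sum.elim (fun i => a • u i) (fun j => b • w j) z = a • ∑ i, u i + b • ∑ j, w j := by
  simp only [Fintype.sum_sum_type, Sum.elim_inl, Sum.elim_inr, Finset.smul_sum]

lemma sum_vecMulVec_elim_smul :
    ∑ z, vecMulVec (Sum.elim (fun i => a • u i) (fun j => b • w j) z)
        (Sum.elim (fun i => a • u i) (fun j => b • w j) z) =
      (a * a) • ∑ i, vecMulVec (u i) (u i) + (b * b) • ∑ j, vecMulVec (w j) (w j) := by
  simp only [Fintype.sum_sum_type, Sum.elim_inl, Sum.elim_inr, smul_vecMulVec, vecMulVec_smul,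
    Finset.smul_sum, smul_smul]

end Augmentation

/-- The augmentation construction from the proof of the generalized C-step
theorem: combining the rescaled centered data points `√(k(1-ρ)/h)(xᵢ - m)` with
the rescaled artificial points `√(kρ/(p+1)) yⱼ` yields a dataset of `k = h+p+1`
points with mean zero whose second-moment matrix equals the regularized
covariance `K = ρT + (1-ρ)S`. -/
theorem augmented_dataset_mean_zero_cov_K {p h : ℕ} (hh : 0 < h)
    (x : Fin h → (Fin p → ℝ)) (y : Fin (p + 1) → (Fin p → ℝ))
    (m : Fin p → ℝ) (S T : Matrix (Fin p) (Fin p) ℝ)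
    (ρ : ℝ) (hρ : ρ ∈ Set.Icc (0 : ℝ) 1)
    (hm : m = (h : ℝ)⁻¹ • ∑ i, x i)
    (hS : S = (h : ℝ)⁻¹ • ∑ i, vecMulVec (x i - m) (x i - m))
    (hy0 : ((p : ℝ) + 1)⁻¹ • ∑ j, y j = 0)
    (hyT : ((p : ℝ) + 1)⁻¹ • ∑ j, vecMulVec (y j) (y j) = T)
    (k : ℕ) (hk : k = h + p + 1)
    (v : Fin h ⊕ Fin (p + 1) → (Fin p → ℝ))
    (hv : v = Sum.elim
      (fun i => Real.sqrt ((k : ℝ) * (1 - ρ) / (h : ℝ)) • (x i - m))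
      (fun j => Real.sqrt ((k : ℝ) * ρ / ((p : ℝ) + 1)) • y j)) :
    (k : ℝ)⁻¹ • ∑ a, v a = 0 ∧
    (k : ℝ)⁻¹ • ∑ a, vecMulVec (v a) (v a) = ρ • T + (1 - ρ) • S := by
  obtain ⟨hρ0, hρ1⟩ := hρ
  have hk0 : (0 : ℝ) < k := by rw [hk]; positivity
  have weight (c N : ℝ) (hc : 0 ≤ c) (hN : 0 < N) :
      (k : ℝ)⁻¹ * (√(k * c / N) * √(k * c / N) * N) = c := by
    rw [Real.mul_self_sqrt (by positivity)]
    field_simp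
  have : Nonempty (Fin h) := ⟨⟨0, hh⟩⟩
  have hx_centered : ∑ i, (x i - m) = 0 := by
    simpa [hm] using sum_sub_inv_card_smul_sum (K := ℝ) x
  have hy_centered : ∑ j, y j = 0 := (smul_eq_zero_iff_right (by positivity)).mp hy0
  have hSx : ∑ i, vecMulVec (x i - m) (x i - m) = (h : ℝ) • S := by
    rw [hS, smul_inv_smul₀ (by positivity)]
  have hTy : ∑ j, vecMulVec (y j) (y j) = ((p : ℝ) + 1) • T := by
    rw [← hyT, smul_inv_smul₀ (by positivity)]
  subst hv
  constructor
  · rw [sum_elim_smul, hx_centered, hy_centered, smul_zero, smul_zero, add_zero, smul_zero]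
  · rw [sum_vecMulVec_elim_smul, hSx, hTy]
    simp only [smul_add, smul_smul]
    rw [weight _ _ (sub_nonneg.2 hρ1) (by positivity), weight _ _ hρ0 (by positivity), add_comm]
end

section
/- Let v_1,…,v_k be points in ℝ^p with (1/k)∑_{i=1}^k v_i = 0, and suppose K̂ = (1/k)∑_{i=1}^k v_i v_i' is positive definite. Then for every symmetric positive definite p×p matrix S satisfying (1/k)∑_{i=1}^k v_i' S^{-1} v_i = p, one has det(K̂) ≤ det(S), with equality if and only if S = K̂. -/
/-!
With `R = √(S⁻¹)`, the matrix `A = R K̂ R` is positive definite with `tr A = tr (S⁻¹ K̂) = p` and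
`det A = det K̂ / det S`. Its eigenvalues `λᵢ` are positive with sum `p`, so
`log det A = ∑ log λᵢ ≤ ∑ (λᵢ - 1) = 0`, with equality only if every `λᵢ = 1`, that is `A = 1`,
which unwinds to `K̂ = S`.
-/

open Matrix
open scoped MatrixOrder

theorem Matrix.trace_mul_vecMulVec {n R : Type*} [Fintype n] [CommSemiring R]
    (M : Matrix n n R) (w : n → R) :
    (M * vecMulVec w w).trace = w ⬝ᵥ (M *ᵥ w) := by
  rw [mul_vecMulVec, trace_vecMulVec, dotProduct_comm]

namespace Real

variable {ι : Type*} [Fintype ι] {x : ι → ℝ}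

theorem prod_le_one_of_sum_eq_card (hx : ∀ i, 0 < x i) (hsum : ∑ i, x i = Fintype.card ι) :
    ∏ i, x i ≤ 1 := by
  have hlog : log (∏ i, x i) ≤ 0 :=
    calc log (∏ i, x i) = ∑ i, log (x i) :=
          log_prod fun i _ => (hx i).ne'
      _ ≤ ∑ i, (x i - 1) := Finset.sum_le_sum fun i _ => log_le_sub_one_of_pos (hx i)
      _ = 0 := by simp [Finset.sum_sub_distrib, hsum]
  exact (log_nonpos_iff (Finset.prod_pos fun i _ => hx i).le).mp hlog

theorem eq_one_of_prod_eq_one_of_sum_eq_card (hx : ∀ i, 0 < x i)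
    (hsum : ∑ i, x i = Fintype.card ι) (hprod : ∏ i, x i = 1) (i : ι) : x i = 1 := by
  have hgap : ∀ j, 0 ≤ x j - 1 - log (x j) := fun j => by
    linarith [log_le_sub_one_of_pos (hx j)]
  have hsum_gap : ∑ j, (x j - 1 - log (x j)) = 0 := by
    rw [Finset.sum_sub_distrib, ← log_prod fun j _ => (hx j).ne', hprod]
    simp [Finset.sum_sub_distrib, hsum]
  have hi := (Finset.sum_eq_zero_iff_of_nonneg fun j _ => hgap j).mp hsum_gap i (Finset.mem_univ i)
  by_contra hne
  linarith [log_lt_sub_one_of_pos (hx i) hne]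

end Real

namespace Matrix.PosDef

variable {n : Type*} [Fintype n] [DecidableEq n] {A P K : Matrix n n ℝ}

theorem det_le_one_of_trace_eq_card (hA : A.PosDef) (htr : A.trace = Fintype.card n) :
    A.det ≤ 1 := by
  rw [hA.isHermitian.det_eq_prod_eigenvalues]
  refine Real.prod_le_one_of_sum_eq_card hA.eigenvalues_pos ?_
  simpa [hA.isHermitian.trace_eq_sum_eigenvalues] using htr

theorem eq_one_of_trace_eq_card_of_det_eq_one (hA : A.PosDef) (htr : A.trace = Fintype.card n)
    (hdet : A.det = 1) : A = 1 := by
  have heig : ∀ i, hA.isHermitian.eigenvalues i = 1 := by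
    refine Real.eq_one_of_prod_eq_one_of_sum_eq_card hA.eigenvalues_pos ?_ ?_
    · simpa [hA.isHermitian.trace_eq_sum_eigenvalues] using htr
    · simpa [hA.isHermitian.det_eq_prod_eigenvalues] using hdet
  refine CFC.eq_one_of_spectrum_subset_one (R := ℝ) A ?_ hA.isHermitian.isSelfAdjoint
  rw [hA.isHermitian.spectrum_real_eq_range_eigenvalues]
  rintro _ ⟨i, rfl⟩
  exact heig i

theorem sqrt_mul_mul_sqrt (hP : P.PosDef) (hK : K.PosDef) :
    (CFC.sqrt P * K * CFC.sqrt P).PosDef := by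
  have hR : (CFC.sqrt P).PosDef := (hP.isStrictlyPositive.sqrt).posDef
  simpa only [hR.isHermitian.eq] using
    hK.conjTranspose_mul_mul_same (mulVec_injective_of_isUnit hR.isUnit)

theorem det_mul_le_one_of_trace_mul_eq_card (hP : P.PosDef) (hK : K.PosDef)
    (htr : (P * K).trace = Fintype.card n) :
    (P * K).det ≤ 1 ∧ ((P * K).det = 1 → P * K = 1) := by
  set R := CFC.sqrt P
  have hRR : R * R = P := CFC.sqrt_mul_sqrt_self P hP.posSemidef.nonneg
  have hA := hP.sqrt_mul_mul_sqrt hK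
  have hAtr : (R * K * R).trace = Fintype.card n := by
    rw [trace_mul_comm, ← Matrix.mul_assoc, hRR, htr]
  have hAdet : (R * K * R).det = (P * K).det := by
    rw [det_mul, det_mul, det_mul, ← hRR, det_mul]; ring
  refine ⟨hAdet ▸ hA.det_le_one_of_trace_eq_card hAtr, fun hdet => ?_⟩
  have h1 : R * K * R = 1 := hA.eq_one_of_trace_eq_card_of_det_eq_one hAtr (hAdet ▸ hdet)
  rwa [← hRR, Matrix.mul_assoc, ← mul_eq_one_comm]

theorem det_le_det_of_trace_inv_mul_eq_card {S : Matrix n n ℝ} (hS : S.PosDef) (hK : K.PosDef)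
    (htr : (S⁻¹ * K).trace = Fintype.card n) : K.det ≤ S.det ∧ (K.det = S.det ↔ S = K) := by
  obtain ⟨hle, heq⟩ := hS.inv.det_mul_le_one_of_trace_mul_eq_card hK htr
  have hSdet := hS.det_pos
  have hdet : (S⁻¹ * K).det = K.det / S.det := by
    rw [det_mul, det_nonsing_inv, Ring.inverse_eq_inv', inv_mul_eq_div]
  rw [hdet, div_le_one hSdet] at hle
  refine ⟨hle, fun h => ?_, fun h => h ▸ rfl⟩
  have hinv : S⁻¹ * K = 1 := heq (by rw [hdet, h, div_self hSdet.ne'])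
  rw [← inv_eq_right_inv hinv, nonsing_inv_nonsing_inv S hSdet.ne'.isUnit]

end Matrix.PosDef

theorem grubel_det_min_general {p k : ℕ} (v : Fin k → (Fin p → ℝ))
    (Khat : Matrix (Fin p) (Fin p) ℝ)
    (hKhat : Khat = (k : ℝ)⁻¹ • ∑ i, vecMulVec (v i) (v i))
    (hKhatpd : Khat.PosDef) :
    ∀ S : Matrix (Fin p) (Fin p) ℝ, S.PosDef →
      (k : ℝ)⁻¹ * ∑ i, v i ⬝ᵥ (S⁻¹ *ᵥ v i) = (p : ℝ) →
      Khat.det ≤ S.det ∧ (Khat.det = S.det ↔ S = Khat) := by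
  intro S hS hdist
  refine hS.det_le_det_of_trace_inv_mul_eq_card hKhatpd ?_
  rw [hKhat, Matrix.mul_smul, trace_smul, Matrix.mul_sum, trace_sum, Fintype.card_fin, ← hdist]
  simp only [trace_mul_vecMulVec, smul_eq_mul]

/-- Grübel's determinant-minimization property: among all symmetric positive
definite scatter matrices `S` for which a mean-zero dataset has average
squared Mahalanobis distance `p`, the second-moment matrix `K̂` of the data is
the unique minimizer of the determinant. -/
theorem grubel_det_min {p k : ℕ} (v : Fin k → (Fin p → ℝ))
    (hmean : (k : ℝ)⁻¹ • ∑ i, v i = 0)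
    (Khat : Matrix (Fin p) (Fin p) ℝ)
    (hKhat : Khat = (k : ℝ)⁻¹ • ∑ i, vecMulVec (v i) (v i))
    (hKhatpd : Khat.PosDef) :
    ∀ S : Matrix (Fin p) (Fin p) ℝ, S.PosDef →
      (k : ℝ)⁻¹ * ∑ i, v i ⬝ᵥ (S⁻¹ *ᵥ v i) = (p : ℝ) →
      Khat.det ≤ S.det ∧ (Khat.det = S.det ↔ S = Khat) :=
  grubel_det_min_general v Khat hKhat hKhatpd
end
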